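/- arXiv:2001.09626 — 2 statements merged into one kernel-verified Lean document; each statement's English description precedes it below -/
import Mathlib

section
/- Let A be a symmetric positive semidefinite n×n real matrix and B an m×n real matrix such that ker(A) ∩ ker(B) = {0} and B has full row rank (ker(Bᵀ) = {0}). Then the saddle point system [[A, Bᵀ],[B, 0]] [u; λ] = [f; 0] has a unique solution for every f ∈ ℝⁿ, i.e., the block matrix [[A, Bᵀ],[B, 0]] is invertible. -/
/-!
If `(u, w)` lies in the kernel of the block matrix, then `A u + Bᴴ w = 0` and `B u = 0`. Pairing
the first equation with `u` kills the `Bᴴ w` term, since `u* Bᴴ w = (B u)* w = 0`, leaving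
`u* A u = 0`; for a positive semidefinite `A` this forces `A u = 0`. Hence `u ∈ ker A ∩ ker B = 0`,
after which `Bᴴ w = 0` and injectivity of `Bᴴ` give `w = 0`.
-/

open scoped ComplexOrder
open Matrix

namespace Matrix

variable {𝕜 n m : Type*} [RCLike 𝕜] [Fintype n] [Fintype m]
  {A : Matrix n n 𝕜} {B : Matrix m n 𝕜}

theorem PosSemidef.mulVec_eq_zero_of_add_conjTranspose_mulVec_eq_zero (hA : A.PosSemidef)
    {u : n → 𝕜} {w : m → 𝕜} (h₁ : A *ᵥ u + Bᴴ *ᵥ w = 0) (h₂ : B *ᵥ u = 0) : A *ᵥ u = 0 := by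
  have hBw : star u ⬝ᵥ Bᴴ *ᵥ w = 0 := by
    rw [dotProduct_mulVec, ← star_mulVec, h₂, star_zero, zero_dotProduct]
  have hAu : star u ⬝ᵥ A *ᵥ u = 0 := by
    simpa only [dotProduct_add, hBw, add_zero, dotProduct_zero] using congrArg (star u ⬝ᵥ ·) h₁
  exact (hA.dotProduct_mulVec_zero_iff u).mp hAu

theorem PosSemidef.eq_zero_of_saddle_point_eq_zero (hA : A.PosSemidef)
    (hker : ∀ v, A *ᵥ v = 0 → B *ᵥ v = 0 → v = 0) (hBH : ∀ w, Bᴴ *ᵥ w = 0 → w = 0)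
    {u : n → 𝕜} {w : m → 𝕜} (h₁ : A *ᵥ u + Bᴴ *ᵥ w = 0) (h₂ : B *ᵥ u = 0) :
    u = 0 ∧ w = 0 := by
  have hu : u = 0 := hker u (hA.mulVec_eq_zero_of_add_conjTranspose_mulVec_eq_zero h₁ h₂) h₂
  refine ⟨hu, hBH w ?_⟩
  rwa [hu, mulVec_zero, zero_add] at h₁

theorem PosSemidef.isUnit_fromBlocks_conjTranspose_zero [DecidableEq n] [DecidableEq m]
    (hA : A.PosSemidef) (hker : ∀ v, A *ᵥ v = 0 → B *ᵥ v = 0 → v = 0)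
    (hBH : ∀ w, Bᴴ *ᵥ w = 0 → w = 0) : IsUnit (fromBlocks A Bᴴ B 0) := by
  rw [← mulVec_injective_iff_isUnit, ← coe_mulVecLin, ← LinearMap.ker_eq_bot,
    ker_mulVecLin_eq_bot_iff]
  intro x hx
  rw [fromBlocks_mulVec, zero_mulVec, add_zero, ← Sum.elim_zero_zero, Sum.elim_eq_iff] at hx
  rw [← Sum.elim_comp_inl_inr x, ← Sum.elim_zero_zero, Sum.elim_eq_iff]
  exact hA.eq_zero_of_saddle_point_eq_zero hker hBH hx.1 hx.2

end Matrix

/-- Saddle point system with PSD `A`, full-row-rank `B`, and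
`ker A ∩ ker B = {0}` is uniquely solvable: the block matrix is invertible. -/
theorem saddle_point_invertible {n m : ℕ}
    (A : Matrix (Fin n) (Fin n) ℝ) (B : Matrix (Fin m) (Fin n) ℝ)
    (hA : A.PosSemidef)
    (hker : ∀ v : Fin n → ℝ, A.mulVec v = 0 → B.mulVec v = 0 → v = 0)
    (hBT : ∀ w : Fin m → ℝ, Bᵀ.mulVec w = 0 → w = 0) :
    IsUnit (Matrix.fromBlocks A Bᵀ B (0 : Matrix (Fin m) (Fin m) ℝ)) := by
  rw [← conjTranspose_eq_transpose_of_trivial] at hBT ⊢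
  exact hA.isUnit_fromBlocks_conjTranspose_zero hker hBT
end

section
/- Let 𝒜 = [[A, (PχB)ᵀ],[PχB, 0]] where A ∈ ℝ^{n×n} is symmetric positive semidefinite, B ∈ ℝ^{m×n}, Pχ is the orthogonal projection onto ker(Gᵀ) with G := BR and range(R) = ker(A), and ker(A) ∩ ker(B) = {0}, ker(Bᵀ) = {0}. Then 𝒜 maps range(A) × ker(Gᵀ) bijectively onto itself. -/
/-!
Write `𝒜 = [[A, Cᵀ], [C, 0]]` with `C = PχB`. Since `GᵀPχ = 0`, `C` maps into `ker Gᵀ`, and on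
`ker Gᵀ` we have `Cᵀ = Bᵀ`, whose values are orthogonal to `ker A = range R` (as `RᵀBᵀ = Gᵀ`), hence
lie in `range A` by symmetry of `A`. So `𝒜` maps `range A × ker Gᵀ` into itself, and it suffices
to show that its kernel there is trivial. If `Ax + Cᵀy = 0` and `Cx = 0`, then
`xᵀAx = -(Cx)ᵀy = 0`, so `Ax = 0` by semidefiniteness; `x ∈ range A ∩ ker A = 0`, and then
`Bᵀy = 0` gives `y = 0`.
-/

open Matrix

namespace Matrix

section Symmetric

variable {n : Type*} [Fintype n]

theorem IsSymm.disjoint_range_ker {𝕜 : Type*} [Field 𝕜] [LinearOrder 𝕜] [IsStrictOrderedRing 𝕜]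
    {A : Matrix n n 𝕜} (hA : A.IsSymm) :
    Disjoint (LinearMap.range A.mulVecLin) (LinearMap.ker A.mulVecLin) := by
  rw [Submodule.disjoint_def]
  rintro _ ⟨w, rfl⟩ hAx
  simp only [LinearMap.mem_ker, mulVecLin_apply] at hAx ⊢
  have : A *ᵥ w ⬝ᵥ A *ᵥ w = 0 := by
    rw [dotProduct_mulVec, ← mulVec_transpose, hA.eq, hAx, zero_dotProduct]
  exact dotProduct_self_eq_zero.1 this

theorem IsSymm.exists_mulVec_eq_of_forall_dotProduct_eq_zero [DecidableEq n]
    {A : Matrix n n ℝ} (hA : A.IsSymm) {v : n → ℝ} (hv : ∀ u, A *ᵥ u = 0 → u ⬝ᵥ v = 0) :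
    ∃ w, A *ᵥ w = v := by
  have hadj : A.toEuclideanLin.adjoint = A.toEuclideanLin := by
    rw [← toEuclideanLin_conjTranspose_eq_adjoint, conjTranspose_eq_transpose_of_trivial, hA.eq]
  have hperp : WithLp.toLp 2 v ∈ (LinearMap.ker A.toEuclideanLin)ᗮ := by
    refine (Submodule.mem_orthogonal' _ _).2 fun u hu => ?_
    rw [EuclideanSpace.inner_eq_star_dotProduct]
    simpa [dotProduct_comm] using hv u.ofLp (by simpa using congrArg WithLp.ofLp hu)
  rw [LinearMap.orthogonal_ker, hadj] at hperp
  obtain ⟨w, hw⟩ := hperp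
  exact ⟨w.ofLp, by simpa using congrArg WithLp.ofLp hw⟩

end Symmetric

section Projection

variable {m k 𝕜 : Type*} [Fintype m] [Fintype k] [DecidableEq k]

theorem isUnit_det_transpose_mul_self [Field 𝕜] [LinearOrder 𝕜] [IsStrictOrderedRing 𝕜]
    {G : Matrix m k 𝕜} (hG : Function.Injective G.mulVec) : IsUnit (Gᵀ * G).det := by
  rw [← isUnit_iff_isUnit_det, ← mulVec_injective_iff_isUnit, ← coe_mulVecLin,
    ← LinearMap.ker_eq_bot, ker_mulVecLin_transpose_mul_self, LinearMap.ker_eq_bot]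
  exact hG

variable [DecidableEq m] [CommRing 𝕜] {G : Matrix m k 𝕜}

/-- The orthogonal projection onto `ker Gᵀ` when `GᵀG` is invertible (junk otherwise). -/
noncomputable def projKerTranspose (G : Matrix m k 𝕜) : Matrix m m 𝕜 :=
  1 - G * (Gᵀ * G)⁻¹ * Gᵀ

theorem transpose_mul_projKerTranspose (hG : IsUnit (Gᵀ * G).det) :
    Gᵀ * projKerTranspose G = 0 := by
  rw [projKerTranspose, Matrix.mul_sub, Matrix.mul_one, ← Matrix.mul_assoc, ← Matrix.mul_assoc,
    mul_nonsing_inv _ hG, Matrix.one_mul, sub_self]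

theorem projKerTranspose_transpose_mulVec {y : m → 𝕜} (hy : Gᵀ *ᵥ y = 0) :
    (projKerTranspose G)ᵀ *ᵥ y = y := by
  simp only [projKerTranspose, transpose_sub, transpose_one, transpose_mul, transpose_transpose,
    sub_mulVec, one_mulVec, ← mulVec_mulVec, hy, mulVec_zero, sub_zero]

end Projection

section SaddlePoint

variable {n m : Type*} [Fintype n] [Fintype m]

def saddlePointOp {𝕜 : Type*} [CommRing 𝕜] (A : Matrix n n 𝕜) (C : Matrix m n 𝕜) :
    (n → 𝕜) × (m → 𝕜) →ₗ[𝕜] (n → 𝕜) × (m → 𝕜) :=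
  (A.mulVecLin ∘ₗ LinearMap.fst 𝕜 _ _ + Cᵀ.mulVecLin ∘ₗ LinearMap.snd 𝕜 _ _).prod
    (C.mulVecLin ∘ₗ LinearMap.fst 𝕜 _ _)

@[simp]
theorem saddlePointOp_apply {𝕜 : Type*} [CommRing 𝕜] (A : Matrix n n 𝕜) (C : Matrix m n 𝕜)
    (p : (n → 𝕜) × (m → 𝕜)) : saddlePointOp A C p = (A *ᵥ p.1 + Cᵀ *ᵥ p.2, C *ᵥ p.1) :=
  rfl

variable {A : Matrix n n ℝ} {C : Matrix m n ℝ}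

theorem saddlePointOp_eq_zero (hA : A.PosSemidef) {x : n → ℝ} {y : m → ℝ}
    (hx : x ∈ LinearMap.range A.mulVecLin) (hCy : Cᵀ *ᵥ y = 0 → y = 0)
    (h : saddlePointOp A C (x, y) = 0) : (x, y) = 0 := by
  simp only [saddlePointOp_apply, Prod.mk_eq_zero] at h
  obtain ⟨hfst, hCx⟩ := h
  have hxAx : x ⬝ᵥ A *ᵥ x = 0 := by
    have := congrArg (x ⬝ᵥ ·) hfst
    simpa [dotProduct_add, dotProduct_mulVec x Cᵀ, ← mulVec_transpose, hCx] using this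
  have hAx : A *ᵥ x = 0 := (hA.dotProduct_mulVec_zero_iff x).1 hxAx
  have hx0 : x = 0 := Submodule.disjoint_def.1
    (isHermitian_iff_isSymm.1 hA.isHermitian).disjoint_range_ker x hx hAx
  rw [hx0, mulVec_zero, zero_add] at hfst
  rw [hx0, hCy hfst, Prod.mk_zero_zero]

theorem saddlePointOp_bijOn (hA : A.PosSemidef) {W : Submodule ℝ (m → ℝ)}
    (hCW : ∀ x, C *ᵥ x ∈ W) (hCtW : ∀ y ∈ W, Cᵀ *ᵥ y ∈ LinearMap.range A.mulVecLin)
    (hCt : ∀ y ∈ W, Cᵀ *ᵥ y = 0 → y = 0) :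
    Set.BijOn (saddlePointOp A C) ((LinearMap.range A.mulVecLin).prod W)
      ((LinearMap.range A.mulVecLin).prod W) := by
  have hmaps : ∀ p ∈ (LinearMap.range A.mulVecLin).prod W,
      saddlePointOp A C p ∈ (LinearMap.range A.mulVecLin).prod W := by
    rintro ⟨x, y⟩ ⟨-, hy⟩
    exact ⟨add_mem (LinearMap.mem_range_self _ x) (hCtW y hy), hCW x⟩
  have hinj : Set.InjOn (saddlePointOp A C) ((LinearMap.range A.mulVecLin).prod W) :=
    LinearMap.injOn_of_disjoint_ker le_rfl <| Submodule.disjoint_def.2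
      fun ⟨_, y⟩ ⟨hx, hy⟩ h => saddlePointOp_eq_zero hA hx (hCt y hy) h
  exact ⟨hmaps, hinj, (LinearMap.injOn_iff_surjOn hmaps).1 hinj⟩

end SaddlePoint

end Matrix

theorem projected_saddle_point_bijective_general {n m r : ℕ}
    (A : Matrix (Fin n) (Fin n) ℝ) (B : Matrix (Fin m) (Fin n) ℝ)
    (R : Matrix (Fin n) (Fin r) ℝ)
    (hA : A.PosSemidef)
    (hR : {v : Fin n → ℝ | ∃ w : Fin r → ℝ, R.mulVec w = v} =
      {v : Fin n → ℝ | A.mulVec v = 0})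
    (hBT : ∀ w : Fin m → ℝ, Bᵀ.mulVec w = 0 → w = 0)
    (G : Matrix (Fin m) (Fin r) ℝ) (hG : G = B * R)
    (hGrank : ∀ x : Fin r → ℝ, G.mulVec x = 0 → x = 0)
    (Pχ : Matrix (Fin m) (Fin m) ℝ)
    (hPχ : Pχ = (1 : Matrix (Fin m) (Fin m) ℝ) - G * (Gᵀ * G)⁻¹ * Gᵀ) :
    Set.BijOn
      (fun p : (Fin n → ℝ) × (Fin m → ℝ) =>
        (A.mulVec p.1 + (Pχ * B)ᵀ.mulVec p.2, (Pχ * B).mulVec p.1))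
      {p : (Fin n → ℝ) × (Fin m → ℝ) |
        (∃ w : Fin n → ℝ, A.mulVec w = p.1) ∧ Gᵀ.mulVec p.2 = 0}
      {p : (Fin n → ℝ) × (Fin m → ℝ) |
        (∃ w : Fin n → ℝ, A.mulVec w = p.1) ∧ Gᵀ.mulVec p.2 = 0} := by
  change Pχ = projKerTranspose G at hPχ
  have hGtP : Gᵀ * Pχ = 0 := hPχ ▸ transpose_mul_projKerTranspose
    (isUnit_det_transpose_mul_self fun x y hxy => sub_eq_zero.1 <|
      hGrank _ (by rw [mulVec_sub, hxy, sub_self]))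
  have hPBt : ∀ y, Gᵀ *ᵥ y = 0 → (Pχ * B)ᵀ *ᵥ y = Bᵀ *ᵥ y := fun y hy => by
    rw [transpose_mul, ← mulVec_mulVec, hPχ, projKerTranspose_transpose_mulVec hy]
  have hBtA : ∀ y, Gᵀ *ᵥ y = 0 → Bᵀ *ᵥ y ∈ LinearMap.range A.mulVecLin := fun y hy => by
    refine (isHermitian_iff_isSymm.1 hA.isHermitian).exists_mulVec_eq_of_forall_dotProduct_eq_zero
      fun u hu => ?_
    obtain ⟨w, rfl⟩ : u ∈ {v | ∃ w, R *ᵥ w = v} := hR ▸ hu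
    have hRtBt : Rᵀ *ᵥ (Bᵀ *ᵥ y) = 0 := by rw [mulVec_mulVec, ← transpose_mul, ← hG, hy]
    rw [dotProduct_comm, dotProduct_mulVec, ← mulVec_transpose, hRtBt, zero_dotProduct]
  exact saddlePointOp_bijOn (C := Pχ * B) (W := LinearMap.ker Gᵀ.mulVecLin) hA
    (fun x => show Gᵀ *ᵥ ((Pχ * B) *ᵥ x) = 0 by
      rw [mulVec_mulVec, ← Matrix.mul_assoc, hGtP, Matrix.zero_mul, zero_mulVec])
    (fun y hy => hPBt y hy ▸ hBtA y hy) (fun y hy h => hBT y (hPBt y hy ▸ h))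

/-- The projected saddle-point operator `𝒜 = [[A, (PχB)ᵀ],[PχB, 0]]` maps
`range A × ker Gᵀ` bijectively onto itself. -/
theorem projected_saddle_point_bijective {n m r : ℕ}
    (A : Matrix (Fin n) (Fin n) ℝ) (B : Matrix (Fin m) (Fin n) ℝ)
    (R : Matrix (Fin n) (Fin r) ℝ)
    (hA : A.PosSemidef)
    (hR : {v : Fin n → ℝ | ∃ w : Fin r → ℝ, R.mulVec w = v} =
      {v : Fin n → ℝ | A.mulVec v = 0})
    (hkerAB : ∀ v : Fin n → ℝ, A.mulVec v = 0 → B.mulVec v = 0 → v = 0)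
    (hBT : ∀ w : Fin m → ℝ, Bᵀ.mulVec w = 0 → w = 0)
    (G : Matrix (Fin m) (Fin r) ℝ) (hG : G = B * R)
    (hGrank : ∀ x : Fin r → ℝ, G.mulVec x = 0 → x = 0)
    (Pχ : Matrix (Fin m) (Fin m) ℝ)
    (hPχ : Pχ = (1 : Matrix (Fin m) (Fin m) ℝ) - G * (Gᵀ * G)⁻¹ * Gᵀ) :
    Set.BijOn
      (fun p : (Fin n → ℝ) × (Fin m → ℝ) =>
        (A.mulVec p.1 + (Pχ * B)ᵀ.mulVec p.2, (Pχ * B).mulVec p.1))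
      {p : (Fin n → ℝ) × (Fin m → ℝ) |
        (∃ w : Fin n → ℝ, A.mulVec w = p.1) ∧ Gᵀ.mulVec p.2 = 0}
      {p : (Fin n → ℝ) × (Fin m → ℝ) |
        (∃ w : Fin n → ℝ, A.mulVec w = p.1) ∧ Gᵀ.mulVec p.2 = 0} :=
  projected_saddle_point_bijective_general A B R hA hR hBT G hG hGrank Pχ hPχ
end
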